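/- Let P₁ ≤ P be partitions of {1,...,n} such that every block of P₁ and every block of P has cardinality 1 or 2 (good partitions). If the number of 2-element blocks of P exceeds that of P₁ by m, then D(P₁,P) = (-1)^m. -/

import Mathlib

instance {α : Type*} [Finite α] : Finite (Finset α) :=
  Finite.of_injective (fun s => (↑s : Set α)) (fun _ _ h => Finset.coe_injective h)
instance {α : Type*} [Finite α] : Finite (Setoid α) :=
  Finite.of_injective (fun s => s.r) (fun a b h => Setoid.ext (fun x y => by
    change a.r x y ↔ b.r x y
    rw [show a.r = b.r from h]))

/-- `chainDiff a b` is the number of odd-cardinality chains minus the number of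
even-cardinality chains from `a` to `b`: a chain from `a` to `b` is a nonempty
totally ordered finite family whose least element is `a` and greatest element is `b`. -/
noncomputable def chainDiff {α : Type*} [PartialOrder α] (a b : α) : ℤ :=
  ({C : Finset α | a ∈ C ∧ b ∈ C ∧ IsChain (· ≤ ·) (↑C : Set α) ∧
      (∀ x ∈ C, a ≤ x ∧ x ≤ b) ∧ Odd C.card}).ncard
  - ({C : Finset α | a ∈ C ∧ b ∈ C ∧ IsChain (· ≤ ·) (↑C : Set α) ∧
      (∀ x ∈ C, a ≤ x ∧ x ≤ b) ∧ Even C.card}).ncard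

section ChainLemmas
variable {α : Type*} [PartialOrder α] [Finite α]

/-- The set of chains from `a` to `b`. -/
def chainsBtw (a b : α) : Set (Finset α) :=
  {C | a ∈ C ∧ b ∈ C ∧ IsChain (· ≤ ·) (↑C : Set α) ∧ ∀ x ∈ C, a ≤ x ∧ x ≤ b}

lemma chainDiff_eq_sum (a b : α) :
    chainDiff a b = ∑ C ∈ (chainsBtw a b).toFinite.toFinset, (-1 : ℤ) ^ (C.card + 1) := by
  classical
  rw [chainDiff]
  have h1 : {C : Finset α | a ∈ C ∧ b ∈ C ∧ IsChain (· ≤ ·) (↑C : Set α) ∧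
      (∀ x ∈ C, a ≤ x ∧ x ≤ b) ∧ Odd C.card}
      = ↑((chainsBtw a b).toFinite.toFinset.filter (fun C => Odd C.card)) := by
    ext C
    simp only [Set.mem_setOf_eq, Finset.coe_filter, Set.Finite.mem_toFinset, chainsBtw,
      Set.mem_setOf_eq]
    tauto
  have h2 : {C : Finset α | a ∈ C ∧ b ∈ C ∧ IsChain (· ≤ ·) (↑C : Set α) ∧
      (∀ x ∈ C, a ≤ x ∧ x ≤ b) ∧ Even C.card}
      = ↑((chainsBtw a b).toFinite.toFinset.filter (fun C => ¬ Odd C.card)) := by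
    ext C
    simp only [Set.mem_setOf_eq, Finset.coe_filter, Set.Finite.mem_toFinset, chainsBtw,
      Set.mem_setOf_eq, Nat.not_odd_iff_even]
    tauto
  rw [h1, h2, Set.ncard_coe_finset, Set.ncard_coe_finset]
  rw [← Finset.sum_filter_add_sum_filter_not ((chainsBtw a b).toFinite.toFinset)
    (fun C => Odd C.card)]
  have e1 : ∀ C ∈ (chainsBtw a b).toFinite.toFinset.filter (fun C => Odd C.card),
      (-1 : ℤ) ^ (C.card + 1) = 1 := by
    intro C hC
    simp only [Finset.mem_filter] at hC
    rw [Odd.add_one hC.2 |>.neg_one_pow]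
  have e2 : ∀ C ∈ (chainsBtw a b).toFinite.toFinset.filter (fun C => ¬ Odd C.card),
      (-1 : ℤ) ^ (C.card + 1) = -1 := by
    intro C hC
    simp only [Finset.mem_filter, Nat.not_odd_iff_even] at hC
    rw [Even.add_one hC.2 |>.neg_one_pow]
  rw [Finset.sum_congr rfl e1, Finset.sum_congr rfl e2]
  simp [sub_eq_add_neg]

lemma chainDiff_self (b : α) : chainDiff b b = 1 := by
  have hset : chainsBtw b b = {{b}} := by
    ext C
    simp only [chainsBtw, Set.mem_setOf_eq, Set.mem_singleton_iff]
    constructor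
    · rintro ⟨hb, -, -, hbd⟩
      apply Finset.Subset.antisymm
      · intro x hx
        have := (hbd x hx)
        simp [le_antisymm this.2 this.1]
      · simpa using hb
    · rintro rfl
      refine ⟨Finset.mem_singleton_self b, Finset.mem_singleton_self b, ?_, ?_⟩
      · simp [IsChain]
      · intro x hx; simp_all
  rw [chainDiff_eq_sum, hset]
  simp

lemma exists_least_of_chain {D : Finset α} (hne : D.Nonempty)
    (hch : IsChain (· ≤ ·) (↑D : Set α)) : ∃ x ∈ D, ∀ y ∈ D, x ≤ y := by
  obtain ⟨x, hx, hmin⟩ : ∃ x ∈ D, ∀ y ∈ D, ¬ y < x := by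
    obtain ⟨x, hx, hm⟩ := Finset.exists_minimal hne; exact ⟨x, hx, fun y hy hlt => hlt.not_ge (hm hy hlt.le)⟩
  refine ⟨x, hx, fun y hy => ?_⟩
  rcases eq_or_ne y x with rfl | hne'
  · exact le_rfl
  · rcases hch (Finset.mem_coe.2 hy) (Finset.mem_coe.2 hx) hne' with h | h
    · exact absurd (lt_of_le_of_ne h hne') (hmin y hy)
    · exact h

lemma chainDiff_rec {a b : α} (hab : a < b) :
    chainDiff a b = - ∑ x ∈ (Set.Ioc a b).toFinite.toFinset, chainDiff x b := by
  classical
  set I := (Set.Ioc a b).toFinite.toFinset with hI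
  set Ufin := I.biUnion (fun x => (chainsBtw x b).toFinite.toFinset) with hU
  have hmemI : ∀ x, x ∈ I ↔ a < x ∧ x ≤ b := by
    intro x; simp [hI, Set.Finite.mem_toFinset]
  have hmemC : ∀ (x : α) (C : Finset α), C ∈ (chainsBtw x b).toFinite.toFinset ↔
      (x ∈ C ∧ b ∈ C ∧ IsChain (· ≤ ·) (↑C : Set α) ∧ ∀ y ∈ C, x ≤ y ∧ y ≤ b) := by
    intro x C; simp [Set.Finite.mem_toFinset, chainsBtw]
  have hbij : ∑ C ∈ (chainsBtw a b).toFinite.toFinset, (-1 : ℤ) ^ (C.card + 1)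
      = ∑ D ∈ Ufin, (-1 : ℤ) ^ D.card := by
    refine Finset.sum_nbij' (i := fun C => C.erase a) (j := fun D => insert a D) ?_ ?_ ?_ ?_ ?_
    · -- i maps into Ufin
      intro C hC
      rw [hmemC a] at hC
      obtain ⟨haC, hbC, hch, hbd⟩ := hC
      have hbD : b ∈ C.erase a := Finset.mem_erase.2 ⟨hab.ne', hbC⟩
      have hchD : IsChain (· ≤ ·) (↑(C.erase a) : Set α) :=
        hch.mono (by simp [Finset.coe_subset])
      obtain ⟨x, hxD, hleast⟩ := exists_least_of_chain ⟨b, hbD⟩ hchD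
      rw [hU, Finset.mem_biUnion]
      refine ⟨x, ?_, ?_⟩
      · rw [hmemI]
        have hxC := Finset.mem_of_mem_erase hxD
        have hxa : x ≠ a := Finset.ne_of_mem_erase hxD
        exact ⟨lt_of_le_of_ne (hbd x hxC).1 (Ne.symm hxa), (hbd x hxC).2⟩
      · rw [hmemC x]
        exact ⟨hxD, hbD, hchD, fun y hy =>
          ⟨hleast y hy, (hbd y (Finset.mem_of_mem_erase hy)).2⟩⟩
    · -- j maps back
      intro D hD
      rw [hU, Finset.mem_biUnion] at hD
      obtain ⟨x, hxI, hDx⟩ := hD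
      rw [hmemI] at hxI
      rw [hmemC x] at hDx
      obtain ⟨hxD, hbD, hch, hbd⟩ := hDx
      rw [hmemC a]
      have haD : a ∉ D := fun h => absurd (hxI.1.trans_le (hbd a h).1) (lt_irrefl a)
      refine ⟨Finset.mem_insert_self a D, Finset.mem_insert_of_mem hbD, ?_, ?_⟩
      · rw [Finset.coe_insert]
        refine hch.insert (fun y hy hne => Or.inl ?_)
        exact (hxI.1.trans_le (hbd y hy).1).le
      · intro y hy
        rcases Finset.mem_insert.1 hy with rfl | hy'
        · exact ⟨le_rfl, hab.le⟩
        · exact ⟨(hxI.1.trans_le (hbd y hy').1).le, (hbd y hy').2⟩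
    · -- left inverse
      intro C hC
      rw [hmemC a] at hC
      exact Finset.insert_erase hC.1
    · -- right inverse
      intro D hD
      rw [hU, Finset.mem_biUnion] at hD
      obtain ⟨x, hxI, hDx⟩ := hD
      rw [hmemI] at hxI
      rw [hmemC x] at hDx
      have haD : a ∉ D := fun h => absurd (hxI.1.trans_le (hDx.2.2.2 a h).1) (lt_irrefl a)
      exact Finset.erase_insert haD
    · -- f C = g (i C)
      intro C hC
      rw [hmemC a] at hC
      have : (C.erase a).card + 1 = C.card := Finset.card_erase_add_one hC.1
      rw [← this, pow_succ, pow_succ]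
      ring
  have hdisj : ∀ x ∈ I, ∀ y ∈ I, x ≠ y →
      Disjoint ((chainsBtw x b).toFinite.toFinset) ((chainsBtw y b).toFinite.toFinset) := by
    intro x hx y hy hxy
    rw [Finset.disjoint_left]
    intro C hCx hCy
    rw [hmemC x] at hCx
    rw [hmemC y] at hCy
    exact hxy (le_antisymm (hCx.2.2.2 y hCy.1).1 (hCy.2.2.2 x hCx.1).1)
  rw [chainDiff_eq_sum, hbij, hU, Finset.sum_biUnion hdisj, ← Finset.sum_neg_distrib]
  refine Finset.sum_congr rfl (fun x hx => ?_)
  rw [chainDiff_eq_sum, ← Finset.sum_neg_distrib]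
  refine Finset.sum_congr rfl (fun C hC => ?_)
  rw [pow_succ]
  ring

end ChainLemmas

section SetoidLemmas
variable {n : ℕ}

/-- Good partition: each class has 1 or 2 elements. -/
def Good (R : Setoid (Fin n)) : Prop := ∀ c ∈ R.classes, c.ncard = 1 ∨ c.ncard = 2

/-- Number of 2-element classes. -/
noncomputable def c2 (R : Setoid (Fin n)) : ℕ := {c ∈ R.classes | c.ncard = 2}.ncard

lemma rel_of_mem_class {R : Setoid (Fin n)} {c : Set (Fin n)} {x y : Fin n}
    (hc : c ∈ R.classes) (hx : x ∈ c) (hy : y ∈ c) : R x y :=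
  R.rel_iff_exists_classes.mpr ⟨c, hc, hx, hy⟩

lemma class_eq_pair {P : Setoid (Fin n)} (hP : Good P) {x y : Fin n} (hxy : x ≠ y)
    (h : P x y) : {z | P z x} = ({x, y} : Set (Fin n)) := by
  have hsub : ({x, y} : Set (Fin n)) ⊆ {z | P z x} := by
    intro z hz
    simp only [Set.mem_insert_iff, Set.mem_singleton_iff] at hz
    rcases hz with rfl | rfl
    · exact P.refl z
    · exact P.symm h
  have hmem := P.mem_classes x
  have hle : ({z | P z x} : Set (Fin n)).ncard ≤ 2 := by
    rcases hP _ hmem with h1 | h1 <;> omega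
  rw [← Set.ncard_pair hxy] at hle
  exact (Set.eq_of_subset_of_ncard_le hsub hle).symm

lemma good_mono {Q P : Setoid (Fin n)} (hQP : Q ≤ P) (hP : Good P) : Good Q := by
  rintro c ⟨a, rfl⟩
  have hsub : {z | Q z a} ⊆ {z | P z a} := fun z hz => hQP hz
  have h1 : ({z | Q z a} : Set (Fin n)).ncard ≤ ({z | P z a} : Set (Fin n)).ncard :=
    Set.ncard_le_ncard hsub
  have h2 : ({z | P z a} : Set (Fin n)).ncard ≤ 2 := by
    rcases hP _ (P.mem_classes a) with h1 | h1 <;> omega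
  have h3 : 0 < ({z | Q z a} : Set (Fin n)).ncard :=
    (Set.ncard_pos).2 ⟨a, Q.refl a⟩
  omega

lemma two_classes_mono {Q P : Setoid (Fin n)} (hQP : Q ≤ P) (hP : Good P) :
    {c ∈ Q.classes | c.ncard = 2} ⊆ {c ∈ P.classes | c.ncard = 2} := by
  rintro c ⟨hcQ, hc2⟩
  obtain ⟨x, y, hxy, rfl⟩ := Set.ncard_eq_two.1 hc2
  have hQxy : Q x y := rel_of_mem_class hcQ (by simp) (by simp)
  have hPxy : P x y := hQP hQxy
  have := class_eq_pair hP hxy hPxy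
  exact ⟨this ▸ P.mem_classes x, hc2⟩

lemma eq_of_c2_eq {Q P : Setoid (Fin n)} (hQP : Q ≤ P) (hP : Good P)
    (hc2 : c2 Q = c2 P) : Q = P := by
  have hsub := two_classes_mono hQP hP
  have hset : {c ∈ Q.classes | c.ncard = 2} = {c ∈ P.classes | c.ncard = 2} :=
    Set.eq_of_subset_of_ncard_le hsub (le_of_eq hc2.symm)
  refine le_antisymm hQP (Setoid.le_def.mpr ?_)
  intro x y hPxy
  rcases eq_or_ne x y with rfl | hxy
  · exact Q.refl x
  · have hpair : ({x, y} : Set (Fin n)) ∈ {c ∈ P.classes | c.ncard = 2} := by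
      have := class_eq_pair hP hxy hPxy
      exact ⟨this ▸ P.mem_classes x, Set.ncard_pair hxy⟩
    rw [← hset] at hpair
    exact rel_of_mem_class hpair.1 (by simp) (by simp)

end SetoidLemmas

section Toggle
variable {n : ℕ} (x y : Fin n)

/-- The "toggled pair" predicate. -/
def tpair (a b : Fin n) : Prop := (a = x ∧ b = y) ∨ (a = y ∧ b = x)

variable {x y}

/-- Toggle the pair `{x,y}` in the partition `R`: merge the classes `{x},{y}` into `{x,y}`
or split the class `{x,y}`. -/
def toggle (R : Setoid (Fin n)) (hxy : x ≠ y)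
    (hkey : ∀ z w, R z w → (w = x ∨ w = y) → z = x ∨ z = y) : Setoid (Fin n) := by
  refine ⟨fun a b => (R a b ∧ ¬ tpair x y a b) ∨ (¬ R a b ∧ tpair x y a b), ?_, ?_, ?_⟩
  · -- refl
    intro a
    exact Or.inl ⟨R.refl a, by rintro (⟨rfl, rfl⟩ | ⟨rfl, rfl⟩) <;> exact hxy rfl⟩
  · -- symm
    rintro a b (⟨hr, hnp⟩ | ⟨hnr, hp⟩)
    · refine Or.inl ⟨R.symm hr, ?_⟩
      rintro (⟨rfl, rfl⟩ | ⟨rfl, rfl⟩)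
      · exact hnp (Or.inr ⟨rfl, rfl⟩)
      · exact hnp (Or.inl ⟨rfl, rfl⟩)
    · refine Or.inr ⟨fun h => hnr (R.symm h), ?_⟩
      rcases hp with ⟨rfl, rfl⟩ | ⟨rfl, rfl⟩
      · exact Or.inr ⟨rfl, rfl⟩
      · exact Or.inl ⟨rfl, rfl⟩
  · -- trans
    have hkey' : ∀ z w, R z w → (z = x ∨ z = y) → w = x ∨ w = y :=
      fun z w h hz => hkey w z (R.symm h) hz
    rintro a b c (⟨hr, hnp⟩ | ⟨hnr, hp⟩) (⟨hr', hnp'⟩ | ⟨hnr', hp'⟩)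
    · -- both unflipped
      refine Or.inl ⟨R.trans hr hr', ?_⟩
      rintro (⟨rfl, rfl⟩ | ⟨rfl, rfl⟩)
      · -- a = x, c = y
        rcases hkey b c hr' (Or.inr rfl) with rfl | rfl
        · exact hnp' (Or.inl ⟨rfl, rfl⟩)
        · exact hnp (Or.inl ⟨rfl, rfl⟩)
      · -- a = y, c = x
        rcases hkey b c hr' (Or.inl rfl) with rfl | rfl
        · exact hnp (Or.inr ⟨rfl, rfl⟩)
        · exact hnp' (Or.inr ⟨rfl, rfl⟩)
    · -- first unflipped, second flipped
      rcases hp' with ⟨rfl, rfl⟩ | ⟨rfl, rfl⟩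
      · -- b = x, c = y
        rcases hkey a b hr (Or.inl rfl) with rfl | rfl
        · exact Or.inr ⟨hnr', Or.inl ⟨rfl, rfl⟩⟩
        · exact absurd (Or.inr ⟨rfl, rfl⟩) hnp
      · -- b = y, c = x
        rcases hkey a b hr (Or.inr rfl) with rfl | rfl
        · exact absurd (Or.inl ⟨rfl, rfl⟩) hnp
        · exact Or.inr ⟨hnr', Or.inr ⟨rfl, rfl⟩⟩
    · -- first flipped, second unflipped
      rcases hp with ⟨rfl, rfl⟩ | ⟨rfl, rfl⟩
      · -- a = x, b = y
        rcases hkey' b c hr' (Or.inr rfl) with rfl | rfl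
        · exact absurd (Or.inr ⟨rfl, rfl⟩) hnp'
        · exact Or.inr ⟨hnr, Or.inl ⟨rfl, rfl⟩⟩
      · -- a = y, b = x
        rcases hkey' b c hr' (Or.inl rfl) with rfl | rfl
        · exact Or.inr ⟨hnr, Or.inr ⟨rfl, rfl⟩⟩
        · exact absurd (Or.inl ⟨rfl, rfl⟩) hnp'
    · -- both flipped
      have hac : a = c := by
        rcases hp with ⟨ha, hb⟩ | ⟨ha, hb⟩ <;> rcases hp' with ⟨hb', hc⟩ | ⟨hb', hc⟩ <;>
          simp_all
      subst hac
      exact Or.inl ⟨R.refl a, by rintro (⟨rfl, rfl⟩ | ⟨rfl, rfl⟩) <;> exact hxy rfl⟩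

variable {R : Setoid (Fin n)} (hxy : x ≠ y)
    (hkey : ∀ z w, R z w → (w = x ∨ w = y) → z = x ∨ z = y)

lemma toggle_rel_iff (a b : Fin n) :
    toggle R hxy hkey a b ↔
      (R a b ∧ ¬ tpair x y a b) ∨ (¬ R a b ∧ tpair x y a b) := Iff.rfl

lemma toggle_rel_xy : toggle R hxy hkey x y ↔ ¬ R x y := by
  rw [toggle_rel_iff]
  have hp : tpair x y x y := Or.inl ⟨rfl, rfl⟩
  tauto

lemma toggle_key : ∀ z w, toggle R hxy hkey z w → (w = x ∨ w = y) → z = x ∨ z = y := by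
  rintro z w (⟨hr, -⟩ | ⟨-, ⟨rfl, rfl⟩ | ⟨rfl, rfl⟩⟩) hw
  · exact hkey z w hr hw
  · exact Or.inl rfl
  · exact Or.inr rfl

lemma toggle_toggle : toggle (toggle R hxy hkey) hxy (toggle_key hxy hkey) = R := by
  refine Setoid.ext fun a b => ?_
  show ((toggle R hxy hkey) a b ∧ ¬ _) ∨ (¬ (toggle R hxy hkey) a b ∧ _) ↔ _
  rw [toggle_rel_iff]
  by_cases hp : tpair x y a b <;> by_cases hr : R a b <;> tauto

lemma toggle_class_of_ne (a : Fin n) (hax : a ≠ x) (hay : a ≠ y) :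
    {z | toggle R hxy hkey z a} = {z | R z a} := by
  ext z
  simp only [Set.mem_setOf_eq, toggle_rel_iff]
  have hnp : ¬ tpair x y z a := by
    rintro (⟨rfl, rfl⟩ | ⟨rfl, rfl⟩)
    · exact hay rfl
    · exact hax rfl
  tauto

end Toggle

section ToggleClasses
variable {n : ℕ}

lemma R_class_x {x y : Fin n} {R : Setoid (Fin n)}
    (hkey : ∀ z w, R z w → (w = x ∨ w = y) → z = x ∨ z = y)
    (hnr : ¬ R x y) : {z | R z x} = ({x} : Set (Fin n)) := by
  ext z
  have h1 : R z x → z = x ∨ z = y := fun h => hkey z x h (Or.inl rfl)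
  have h2 : ¬ R y x := fun h => hnr (R.symm h)
  have h3 : R x x := R.refl x
  simp only [Set.mem_setOf_eq, Set.mem_singleton_iff]
  by_cases hzx : z = x <;> by_cases hzy : z = y <;> simp_all

lemma R_class_y {x y : Fin n} {R : Setoid (Fin n)}
    (hkey : ∀ z w, R z w → (w = x ∨ w = y) → z = x ∨ z = y)
    (hnr : ¬ R x y) : {z | R z y} = ({y} : Set (Fin n)) := by
  ext z
  have h1 : R z y → z = x ∨ z = y := fun h => hkey z y h (Or.inr rfl)
  have h3 : R y y := R.refl y
  simp only [Set.mem_setOf_eq, Set.mem_singleton_iff]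
  by_cases hzx : z = x <;> by_cases hzy : z = y <;> simp_all

lemma toggle_class_x {x y : Fin n} {R : Setoid (Fin n)} (hxy : x ≠ y)
    (hkey : ∀ z w, R z w → (w = x ∨ w = y) → z = x ∨ z = y)
    (hnr : ¬ R x y) :
    {z | toggle R hxy hkey z x} = ({x, y} : Set (Fin n)) := by
  ext z
  have h1 : R z x → z = x ∨ z = y := fun h => hkey z x h (Or.inl rfl)
  have h2 : ¬ R y x := fun h => hnr (R.symm h)
  have h3 : R x x := R.refl x
  simp only [Set.mem_setOf_eq, toggle_rel_iff, tpair, Set.mem_insert_iff,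
    Set.mem_singleton_iff]
  by_cases hzx : z = x <;> by_cases hzy : z = y <;> simp_all

lemma toggle_class_y {x y : Fin n} {R : Setoid (Fin n)} (hxy : x ≠ y)
    (hkey : ∀ z w, R z w → (w = x ∨ w = y) → z = x ∨ z = y)
    (hnr : ¬ R x y) :
    {z | toggle R hxy hkey z y} = ({x, y} : Set (Fin n)) := by
  ext z
  have h1 : R z y → z = x ∨ z = y := fun h => hkey z y h (Or.inr rfl)
  have h3 : R y y := R.refl y
  simp only [Set.mem_setOf_eq, toggle_rel_iff, tpair, Set.mem_insert_iff,
    Set.mem_singleton_iff]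
  by_cases hzx : z = x <;> by_cases hzy : z = y <;> simp_all

lemma pair_not_mem_twoCls {x y : Fin n} {R : Setoid (Fin n)} (hnr : ¬ R x y) :
    ({x, y} : Set (Fin n)) ∉ {c ∈ R.classes | c.ncard = 2} := by
  rintro ⟨hcl, -⟩
  exact hnr (rel_of_mem_class hcl (by simp) (by simp))

lemma toggle_twoCls {x y : Fin n} {R : Setoid (Fin n)} (hxy : x ≠ y)
    (hkey : ∀ z w, R z w → (w = x ∨ w = y) → z = x ∨ z = y)
    (hnr : ¬ R x y) :
    {c ∈ (toggle R hxy hkey).classes | c.ncard = 2}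
      = insert ({x, y} : Set (Fin n)) {c ∈ R.classes | c.ncard = 2} := by
  ext c
  constructor
  · rintro ⟨⟨a, rfl⟩, h2⟩
    by_cases hax : a = x
    · have : {z | toggle R hxy hkey z a} = ({x, y} : Set (Fin n)) := by
        rw [hax]; exact toggle_class_x hxy hkey hnr
      rw [this]
      exact Set.mem_insert _ _
    by_cases hay : a = y
    · have : {z | toggle R hxy hkey z a} = ({x, y} : Set (Fin n)) := by
        rw [hay]; exact toggle_class_y hxy hkey hnr
      rw [this]
      exact Set.mem_insert _ _
    · rw [toggle_class_of_ne hxy hkey a hax hay] at h2 ⊢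
      exact Set.mem_insert_of_mem _ ⟨R.mem_classes a, h2⟩
  · rintro (rfl | ⟨⟨a, rfl⟩, h2⟩)
    · exact ⟨⟨x, (toggle_class_x hxy hkey hnr).symm⟩, Set.ncard_pair hxy⟩
    · by_cases hax : a = x
      · exfalso
        have : {z | R z a} = ({a} : Set (Fin n)) := by
          conv_rhs => rw [hax]
          rw [hax]
          exact R_class_x hkey hnr
        rw [this] at h2
        simp at h2
      by_cases hay : a = y
      · exfalso
        have : {z | R z a} = ({a} : Set (Fin n)) := by
          conv_rhs => rw [hay]
          rw [hay]
          exact R_class_y hkey hnr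
        rw [this] at h2
        simp at h2
      · exact ⟨⟨a, (toggle_class_of_ne hxy hkey a hax hay).symm⟩, h2⟩

lemma c2_toggle {x y : Fin n} {R : Setoid (Fin n)} (hxy : x ≠ y)
    (hkey : ∀ z w, R z w → (w = x ∨ w = y) → z = x ∨ z = y)
    (hnr : ¬ R x y) : c2 (toggle R hxy hkey) = c2 R + 1 := by
  rw [c2, toggle_twoCls hxy hkey hnr, c2,
    Set.ncard_insert_of_notMem (pair_not_mem_twoCls hnr)]

end ToggleClasses

section MainLemmas
variable {n : ℕ}

lemma neg_one_pow_helper (a b k : ℕ) (h : a = b + k) :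
    ((-1 : ℤ)) ^ k = (-1) ^ a * (-1) ^ b := by
  subst h
  rw [pow_add, mul_comm ((-1 : ℤ) ^ b), mul_assoc, ← pow_add,
    show b + b = 2 * b by omega, pow_mul, neg_one_sq, one_pow, mul_one]

lemma sum_sign_zero {Q P : Setoid (Fin n)} (hQP : Q < P) (hP : Good P) :
    ∑ R ∈ (Set.Icc Q P).toFinite.toFinset, (-1 : ℤ) ^ (c2 R) = 0 := by
  classical
  obtain ⟨x, y, hPxy, hQxy⟩ : ∃ x y, P x y ∧ ¬ Q x y := by
    by_contra hc
    push_neg at hc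
    exact hQP.ne (le_antisymm hQP.le (Setoid.le_def.mpr fun h => hc _ _ h))
  have hxy : x ≠ y := fun h => hQxy (h ▸ Q.refl x)
  have hclx : {z | P z x} = ({x, y} : Set (Fin n)) := class_eq_pair hP hxy hPxy
  have hcly : {z | P z y} = ({x, y} : Set (Fin n)) := by
    rw [class_eq_pair hP hxy.symm (P.symm hPxy)]
    exact Set.pair_comm y x
  have key : ∀ R : Setoid (Fin n), R ≤ P →
      ∀ z w, R z w → (w = x ∨ w = y) → z = x ∨ z = y := by
    intro R hRP z w hzw hw
    have hPzw : P z w := hRP hzw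
    rcases hw with rfl | rfl
    · have : z ∈ {z | P z w} := hPzw
      rw [hclx] at this
      simpa using this
    · have : z ∈ {z | P z w} := hPzw
      rw [hcly] at this
      simpa using this
  set s := (Set.Icc Q P).toFinite.toFinset with hs
  have hmem : ∀ R : Setoid (Fin n), R ∈ s ↔ Q ≤ R ∧ R ≤ P := by
    intro R; simp [hs, Set.Finite.mem_toFinset]
  refine Finset.sum_involution
    (fun R hR => toggle R hxy (key R ((hmem R).1 hR).2)) ?_ ?_ ?_ ?_
  · -- sums to zero
    intro R hR
    by_cases hr : R x y
    · have hnr : ¬ (toggle R hxy (key R ((hmem R).1 hR).2)) x y := by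
        rw [toggle_rel_xy]
        exact fun hn => hn hr
      have h1 := c2_toggle hxy (toggle_key hxy (key R ((hmem R).1 hR).2)) hnr
      rw [toggle_toggle] at h1
      rw [h1, pow_succ]
      ring
    · have h1 := c2_toggle hxy (key R ((hmem R).1 hR).2) hr
      rw [h1, pow_succ]
      ring
  · -- g ≠ id where f ≠ 0
    intro R hR _ heq
    have hiff := toggle_rel_xy hxy (key R ((hmem R).1 hR).2)
    have heq' : toggle R hxy (key R ((hmem R).1 hR).2) = R := heq
    rw [heq'] at hiff
    tauto
  · -- g_mem
    intro R hR
    rw [hmem]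
    obtain ⟨hQR, hRP⟩ := (hmem R).1 hR
    constructor
    · intro a b hab
      refine Or.inl ⟨hQR hab, ?_⟩
      rintro (⟨rfl, rfl⟩ | ⟨rfl, rfl⟩)
      · exact hQxy hab
      · exact hQxy (Q.symm hab)
    · rintro a b (⟨hr, -⟩ | ⟨-, ⟨rfl, rfl⟩ | ⟨rfl, rfl⟩⟩)
      · exact hRP hr
      · exact hPxy
      · exact P.symm hPxy
  · -- involution
    intro R hR
    exact toggle_toggle hxy (key R ((hmem R).1 hR).2)

end MainLemmas

/-- If `P₁ ≤ P` are good partitions of `{1,…,n}` (every block has size 1 or 2) and the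
number of 2-element blocks of `P` exceeds that of `P₁` by `m`, then `D(P₁,P) = (-1)^m`. -/
theorem chainDiff_good (n m : ℕ) (P₁ P : Setoid (Fin n)) (h : P₁ ≤ P)
    (hg1 : ∀ c ∈ P₁.classes, c.ncard = 1 ∨ c.ncard = 2)
    (hg2 : ∀ c ∈ P.classes, c.ncard = 1 ∨ c.ncard = 2)
    (hm : {c ∈ P.classes | c.ncard = 2}.ncard = {c ∈ P₁.classes | c.ncard = 2}.ncard + m) :
    chainDiff P₁ P = (-1) ^ m := by
  classical
  have hgood2 : Good P := hg2
  suffices H : ∀ m : ℕ, ∀ Q : Setoid (Fin n), Q ≤ P → Good Q → c2 P = c2 Q + m →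
      chainDiff Q P = (-1 : ℤ) ^ m from H m P₁ h hg1 hm
  intro m
  induction m using Nat.strong_induction_on with
  | _ m ih =>
    intro Q hQP hQg hm
    rcases Nat.eq_zero_or_pos m with rfl | hmpos
    · have hQeq : Q = P := eq_of_c2_eq hQP hgood2 (by omega)
      rw [hQeq, chainDiff_self, pow_zero]
    · have hne : Q ≠ P := fun he => by rw [he] at hm; omega
      have hlt : Q < P := lt_of_le_of_ne hQP hne
      rw [chainDiff_rec hlt]
      have hIoc : ∀ R ∈ (Set.Ioc Q P).toFinite.toFinset,
          chainDiff R P = (-1 : ℤ) ^ (c2 P) * (-1) ^ (c2 R) := by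
        intro R hR
        rw [Set.Finite.mem_toFinset, Set.mem_Ioc] at hR
        have hRg : Good R := good_mono hR.2 hgood2
        have hle : c2 R ≤ c2 P :=
          Set.ncard_le_ncard (two_classes_mono hR.2 hgood2) (Set.toFinite _)
        have hgt : c2 Q < c2 R := by
          have hle2 : c2 Q ≤ c2 R :=
            Set.ncard_le_ncard (two_classes_mono hR.1.le hRg) (Set.toFinite _)
          rcases lt_or_eq_of_le hle2 with hlt2 | heq2
          · exact hlt2
          · exact absurd (eq_of_c2_eq hR.1.le hRg heq2) hR.1.ne
        have hk : c2 P = c2 R + (c2 P - c2 R) := by omega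
        have hkm : c2 P - c2 R < m := by omega
        rw [ih _ hkm R hR.2 hRg hk]
        exact neg_one_pow_helper _ _ _ hk
      rw [Finset.sum_congr rfl hIoc, ← Finset.mul_sum]
      have hicc : (Set.Icc Q P).toFinite.toFinset
          = insert Q ((Set.Ioc Q P).toFinite.toFinset) := by
        ext R
        simp only [Set.Finite.mem_toFinset, Set.mem_Icc, Set.mem_Ioc, Finset.mem_insert]
        constructor
        · rintro ⟨h1, h2⟩
          rcases h1.lt_or_eq with h3 | h3
          · exact Or.inr ⟨h3, h2⟩
          · exact Or.inl h3.symm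
        · rintro (rfl | ⟨h1, h2⟩)
          · exact ⟨le_rfl, hlt.le⟩
          · exact ⟨h1.le, h2⟩
      have hzero := sum_sign_zero hlt hgood2
      rw [hicc, Finset.sum_insert (by
        simp only [Set.Finite.mem_toFinset, Set.mem_Ioc]
        exact fun hc => absurd hc.1 (lt_irrefl Q))] at hzero
      have hsum : ∑ R ∈ (Set.Ioc Q P).toFinite.toFinset, (-1 : ℤ) ^ (c2 R)
          = -(-1 : ℤ) ^ (c2 Q) := by linarith
      rw [hsum, show ((-1 : ℤ)) ^ m = (-1) ^ (c2 P) * (-1) ^ (c2 Q) from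
        neg_one_pow_helper _ _ _ hm]
      ring
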